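/- Let |Ψ⟩_ralg = √(1/3)|0⟩⊗|0⟩⊗|0⟩⊗|0⟩ + √(2/3)|1⟩⊗|1⟩⊗|fail⟩ ∈ H and let π_ok = |ok⟩⟨ok| with |ok⟩ = √(1/2)(|0⟩⊗|0⟩ − |1⟩⊗|1⟩). Then ⟨Ψ| (π_ok ⊗ π_ok) |Ψ⟩ = 1/12, where the first π_ok acts on tensor factors r,a and the second on tensor factors l,g. That is, by Born's rule the probability that both Chris and David obtain outcome 'ok' is 1/12. -/
import Mathlib


open Matrix
open scoped Matrix Kronecker

noncomputable section

/-- 2×2 complex matrices. -/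
abbrev M2 : Type := Matrix (Fin 2) (Fin 2) ℂ

/-- π₀ = |0⟩⟨0| -/
def pi0 : M2 := !![1, 0; 0, 0]
/-- π₁ = |1⟩⟨1| -/
def pi1 : M2 := !![0, 0; 0, 1]
/-- σx = |0⟩⟨1| + |1⟩⟨0| -/
def sx : M2 := !![0, 1; 1, 0]
/-- σz = |0⟩⟨0| − |1⟩⟨1| -/
def sz : M2 := !![1, 0; 0, -1]

/-- Index type of H = ℂ²⊗ℂ²⊗ℂ²⊗ℂ² (tensor factors ordered r, a, l, g). -/
abbrev I4 : Type := (Fin 2 × Fin 2) × (Fin 2 × Fin 2)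

/-- Basis vector |0⟩ of ℂ². -/
def ket0 : Fin 2 → ℂ := ![1, 0]
/-- Basis vector |1⟩ of ℂ². -/
def ket1 : Fin 2 → ℂ := ![0, 1]

/-- Kronecker (tensor) product of vectors. -/
def tk {α β : Type} (u : α → ℂ) (v : β → ℂ) : α × β → ℂ := fun p => u p.1 * v p.2

/-- Hermitian inner product ⟨u|v⟩ = ∑ i, conj (u i) * v i. -/
def ip {α : Type} [Fintype α] (u v : α → ℂ) : ℂ := star u ⬝ᵥ v

/-- |ok⟩ = √(1/2)(|0⟩⊗|0⟩ − |1⟩⊗|1⟩) ∈ ℂ²⊗ℂ² -/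
def ok2 : Fin 2 × Fin 2 → ℂ := (Real.sqrt (1/2) : ℂ) • (tk ket0 ket0 - tk ket1 ket1)
/-- |fail⟩ = √(1/2)(|0⟩⊗|0⟩ + |1⟩⊗|1⟩) ∈ ℂ²⊗ℂ² -/
def fail2 : Fin 2 × Fin 2 → ℂ := (Real.sqrt (1/2) : ℂ) • (tk ket0 ket0 + tk ket1 ket1)

/-- π_ok = |ok⟩⟨ok| -/
def piok : Matrix (Fin 2 × Fin 2) (Fin 2 × Fin 2) ℂ := vecMulVec ok2 (star ok2)
/-- π_fail = |fail⟩⟨fail| -/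
def pifail : Matrix (Fin 2 × Fin 2) (Fin 2 × Fin 2) ℂ := vecMulVec fail2 (star fail2)

/-- |Ψ⟩_ralg = √(1/3)|0⟩⊗|0⟩⊗|0⟩⊗|0⟩ + √(2/3)|1⟩⊗|1⟩⊗|fail⟩ -/
def Psi : I4 → ℂ :=
  (Real.sqrt (1/3) : ℂ) • tk (tk ket0 ket0) (tk ket0 ket0) +
    (Real.sqrt (2/3) : ℂ) • tk (tk ket1 ket1) fail2

/-- By Born's rule, the probability that both Chris and David obtain outcome
'ok' is ⟨Ψ|(π_ok ⊗ π_ok)|Ψ⟩ = 1/12. -/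
theorem born_prob_ok_ok :
    ip Psi ((piok ⊗ₖ piok).mulVec Psi) = 1/12 := by
  simp only [ip, Psi, piok, ok2, fail2, tk, ket0, ket1, mulVec, dotProduct,
    kroneckerMap_apply, vecMulVec_apply, Fintype.sum_prod_type, Fin.sum_univ_two,
    Pi.add_apply, Pi.sub_apply, Pi.smul_apply, Pi.star_apply, smul_eq_mul,
    Matrix.cons_val_zero, Matrix.cons_val_one, Matrix.head_cons, star_mul',
    mul_zero, zero_mul, mul_one, one_mul, add_zero, zero_add, mul_neg, neg_mul, sub_zero, zero_sub]
  simp only [Complex.star_def, Complex.conj_ofReal, _root_.map_one, _root_.map_zero, map_neg,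
    mul_zero, zero_mul, mul_one, one_mul, mul_neg, neg_mul, neg_neg, add_zero, zero_add, neg_zero]
  have h2 : ((Real.sqrt (1/2) : ℝ) : ℂ) * ((Real.sqrt (1/2) : ℝ) : ℂ) = 1/2 := by
    norm_cast; rw [Real.mul_self_sqrt (by norm_num)]; norm_num
  have h3 : ((Real.sqrt (1/3) : ℝ) : ℂ) * ((Real.sqrt (1/3) : ℝ) : ℂ) = 1/3 := by
    norm_cast; rw [Real.mul_self_sqrt (by norm_num)]; norm_num
  have h23 : ((Real.sqrt (2/3) : ℝ) : ℂ) * ((Real.sqrt (2/3) : ℝ) : ℂ) = 2/3 := by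
    norm_cast; rw [Real.mul_self_sqrt (by norm_num)]; norm_num
  have hr : Real.sqrt (1/3) * Real.sqrt (2/3) * Real.sqrt (1/2) = 1/3 := by
    rw [← Real.sqrt_mul (by norm_num), ← Real.sqrt_mul (by norm_num),
      show (1/3:ℝ)*(2/3)*(1/2) = (1/3)^2 by norm_num, Real.sqrt_sq (by norm_num)]
  have h32 : ((Real.sqrt (1/3) : ℝ) : ℂ) * ((Real.sqrt (2/3) : ℝ) : ℂ) * ((Real.sqrt (1/2) : ℝ) : ℂ) = 1/3 := by
    have := congrArg (fun x : ℝ => (x : ℂ)) hr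
    push_cast at this
    exact this
  ring_nf
  ring_nf at h2 h3 h23 h32
  rw [mul_comm] at h32
  rw [show ((Real.sqrt (1/2):ℝ):ℂ)^4 = (((Real.sqrt (1/2):ℝ):ℂ)^2)^2 by ring, h2, h3]
  norm_num
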